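/- arXiv:1307.7925 — 5 statements merged into one kernel-verified Lean document; each statement's English description precedes it below -/
import Mathlib

section
/- In a directed graph, any vertex can be the entrance of at most one superbubble: if (s, t₁) and (s, t₂) are both entrance/exit pairs of superbubbles, then t₁ = t₂. -/
/-- The vertex set of the (potential) superbubble with entrance `s` and exit `t`:
vertices reachable from `s` without leaving through `t`. -/
def bubbleSet {V : Type*} (Adj : V → V → Prop) (s t : V) : Set V :=
  {v | Relation.ReflTransGen (fun u w => Adj u w ∧ u ≠ t) s v}

/-- The pair `(s,t)` satisfies the reachability, matching and acyclicity conditions. -/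
def SBCore {V : Type*} (Adj : V → V → Prop) (s t : V) : Prop :=
  s ≠ t ∧
  -- reachability: `t` is reachable from `s`
  Relation.ReflTransGen Adj s t ∧
  -- matching: vertices reachable from `s` without passing through `t` are exactly
  -- the vertices from which `t` is reachable without passing through `s`
  bubbleSet Adj s t = {v | Relation.ReflTransGen (fun u w => Adj u w ∧ w ≠ s) v t} ∧
  -- acyclicity: the subgraph induced by `bubbleSet Adj s t` is acyclic
  ¬ ∃ v ∈ bubbleSet Adj s t,
      Relation.TransGen
        (fun u w => Adj u w ∧ u ∈ bubbleSet Adj s t ∧ w ∈ bubbleSet Adj s t) v v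

/-- `(s,t)` is the entrance/exit pair of a superbubble: it satisfies reachability,
matching, acyclicity and minimality. -/
def IsEntranceExit {V : Type*} (Adj : V → V → Prop) (s t : V) : Prop :=
  SBCore Adj s t ∧
  -- minimality
  ¬ ∃ t' ∈ bubbleSet Adj s t, t' ≠ t ∧ t' ≠ s ∧ SBCore Adj s t'

private lemma two_exit {V : Type*} {Adj : V → V → Prop} {a b c : V}
    (h : Relation.ReflTransGen Adj a b) :
    Relation.ReflTransGen (fun u w => Adj u w ∧ u ≠ c) a b ∨
    Relation.ReflTransGen (fun u w => Adj u w ∧ u ≠ b) a c := by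
  induction h using Relation.ReflTransGen.head_induction_on with
  | refl => exact Or.inl Relation.ReflTransGen.refl
  | head hadj _ ih =>
    rename_i x y _
    by_cases hxb : x = b
    · subst hxb; exact Or.inl Relation.ReflTransGen.refl
    by_cases hxc : x = c
    · subst hxc; exact Or.inr Relation.ReflTransGen.refl
    rcases ih with h' | h'
    · exact Or.inl (Relation.ReflTransGen.head ⟨hadj, hxc⟩ h')
    · exact Or.inr (Relation.ReflTransGen.head ⟨hadj, hxb⟩ h')

/-- Any vertex can be the entrance of at most one superbubble. -/
theorem entrance_unique_exit {V : Type*} (Adj : V → V → Prop) (s t₁ t₂ : V)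
    (h₁ : IsEntranceExit Adj s t₁) (h₂ : IsEntranceExit Adj s t₂) : t₁ = t₂ := by
  by_contra hne
  obtain ⟨hc₁, hmin₁⟩ := h₁
  obtain ⟨hc₂, hmin₂⟩ := h₂
  rcases two_exit (c := t₁) hc₂.2.1 with h' | h'
  · exact hmin₁ ⟨t₂, h', fun h => hne h.symm, fun h => hc₂.1 h.symm, hc₂⟩
  · exact hmin₂ ⟨t₁, h', hne, fun h => hc₁.1 h.symm, hc₁⟩
end

section
/- In a directed graph, any vertex can be the exit of at most one superbubble: if (s₁, t) and (s₂, t) are both entrance/exit pairs of superbubbles, then s₁ = s₂. -/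
/-!
Suppose `(s₁, t)` and `(s₂, t)` are both superbubbles. Each entrance lies in the other's
bubble: if, say, `s₂ ∉ U(s₁, t)`, then by matching every path from `s₂` to `t` enters `s₁`;
the pair `(s₂, s₁)` then inherits reachability, matching and acyclicity from `(s₂, t)`, and
`s₁ ∈ U(s₂, t)` contradicts the minimality of `(s₂, t)`. But `s₁ ∈ U(s₂, t)` and
`s₂ ∈ U(s₁, t)` give paths `s₂ → s₁ → s₂` inside `U(s₂, t)`, so acyclicity forces `s₁ = s₂`.
-/

namespace Relation

variable {α : Type*} {r : α → α → Prop} {x a b : α}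

theorem ReflTransGen.target_ne_of_source_ne (h : ReflTransGen (fun u w => r u w ∧ u ≠ x) a b)
    (hb : b ≠ x) : ReflTransGen (fun u w => r u w ∧ w ≠ x) a b := by
  induction h with
  | refl => exact .refl
  | tail _ hcb ih => exact (ih hcb.2).tail ⟨hcb.1, hb⟩

theorem ReflTransGen.source_ne_of_target_ne (h : ReflTransGen (fun u w => r u w ∧ w ≠ x) a b)
    (ha : a ≠ x) : ReflTransGen (fun u w => r u w ∧ u ≠ x) a b := by
  induction h using ReflTransGen.head_induction_on with
  | refl => exact .refl
  | head hac _ ih => exact .head ⟨hac.1, ha⟩ (ih hac.2)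

theorem ReflTransGen.avoids_or_first_visit (x : α) (h : ReflTransGen r a b) :
    ReflTransGen (fun u w => r u w ∧ w ≠ x) a b ∨
      ReflTransGen (fun u w => r u w ∧ u ≠ x) a x ∧ ReflTransGen r x b := by
  induction h using ReflTransGen.head_induction_on with
  | refl => exact Or.inl .refl
  | @head u c huc hcb ih =>
    by_cases hux : u = x
    · subst hux
      exact Or.inr ⟨.refl, .head huc hcb⟩
    by_cases hcx : c = x
    · subst hcx
      exact Or.inr ⟨.single ⟨huc, hux⟩, hcb⟩
    rcases ih with hcb' | ⟨hcx', hxb⟩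
    · exact Or.inl (.head ⟨huc, hcx⟩ hcb')
    · exact Or.inr ⟨.head ⟨huc, hux⟩ hcx', hxb⟩

theorem ReflTransGen.restrict_of_forward_closed {S : Set α}
    (hS : ∀ u w, r u w → u ∈ S → w ∈ S) (h : ReflTransGen r a b) (ha : a ∈ S) :
    ReflTransGen (fun u w => r u w ∧ u ∈ S ∧ w ∈ S) a b := by
  induction h using ReflTransGen.head_induction_on with
  | refl => exact .refl
  | head huc _ ih => exact .head ⟨huc, ha, hS _ _ huc ha⟩ (ih (hS _ _ huc ha))

theorem ReflTransGen.restrict_of_backward_closed {S : Set α}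
    (hS : ∀ u w, r u w → w ∈ S → u ∈ S) (h : ReflTransGen r a b) (hb : b ∈ S) :
    ReflTransGen (fun u w => r u w ∧ u ∈ S ∧ w ∈ S) a b := by
  induction h with
  | refl => exact .refl
  | tail _ hcb ih => exact .tail (ih (hS _ _ hcb hb)) ⟨hcb, hS _ _ hcb hb, hb⟩

theorem ReflTransGen.antisymm (hr : ∀ v, ¬ TransGen r v v) (hab : ReflTransGen r a b)
    (hba : ReflTransGen r b a) : a = b := by
  rcases reflTransGen_iff_eq_or_transGen.mp hab with rfl | hab
  · rfl
  · exact absurd (hab.trans_left hba) (hr a)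

end Relation

open Relation

abbrev bubbleAdj {V : Type*} (Adj : V → V → Prop) (s t : V) : V → V → Prop :=
  fun u w => Adj u w ∧ u ∈ bubbleSet Adj s t ∧ w ∈ bubbleSet Adj s t

section Bubble

variable {V : Type*} {Adj : V → V → Prop} {s s' t a b : V}

theorem reflTransGen_bubbleAdj_of_mem_left (ha : a ∈ bubbleSet Adj s t)
    (h : ReflTransGen (fun u w => Adj u w ∧ u ≠ t) a b) :
    ReflTransGen (bubbleAdj Adj s t) a b :=
  ReflTransGen.mono (fun _ _ e => ⟨e.1.1, e.2⟩) _ _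
    (h.restrict_of_forward_closed (fun _ _ huw hu => hu.tail huw) ha)

namespace SBCore

theorem mem_bubbleSet_iff (h : SBCore Adj s t) {v : V} :
    v ∈ bubbleSet Adj s t ↔ ReflTransGen (fun u w => Adj u w ∧ w ≠ s) v t :=
  Set.ext_iff.mp h.2.2.1 v

theorem reflTransGen_bubbleAdj_of_mem_right (h : SBCore Adj s t) (hb : b ∈ bubbleSet Adj s t)
    (hp : ReflTransGen (fun u w => Adj u w ∧ w ≠ s) a b) :
    ReflTransGen (bubbleAdj Adj s t) a b :=
  ReflTransGen.mono (fun _ _ e => ⟨e.1.1, e.2⟩) _ _ <| hp.restrict_of_backward_closed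
    (fun _ _ huw hw => h.mem_bubbleSet_iff.mpr (.head huw (h.mem_bubbleSet_iff.mp hw))) hb

theorem eq_of_bubbleAdj (h : SBCore Adj s t) (hab : ReflTransGen (bubbleAdj Adj s t) a b)
    (hba : ReflTransGen (bubbleAdj Adj s t) b a) : a = b := by
  refine hab.antisymm (fun v hv => h.2.2.2 ⟨v, ?_, hv⟩) hba
  obtain ⟨_, ⟨_, hv, _⟩, _⟩ := TransGen.head'_iff.mp hv
  exact hv

theorem eq_of_mem_bubbleSet_of_mem_bubbleSet (h : SBCore Adj s' t)
    (hs : s ∈ bubbleSet Adj s' t) (hs' : s' ∈ bubbleSet Adj s t) : s = s' :=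
  h.eq_of_bubbleAdj (reflTransGen_bubbleAdj_of_mem_left hs hs')
    (reflTransGen_bubbleAdj_of_mem_left .refl hs)

section PathsThrough

variable (h : SBCore Adj s' t) (hst : s ≠ t)
  (hblock : ¬ ReflTransGen (fun u w => Adj u w ∧ w ≠ s) s' t)
include h hblock

theorem ne_of_not_reflTransGen : s' ≠ s := by
  rintro rfl
  exact hblock (h.mem_bubbleSet_iff.mp .refl)

theorem right_mem_bubbleSet_of_not_reflTransGen : s ∈ bubbleSet Adj s' s := by
  rcases h.2.1.avoids_or_first_visit s with hs | ⟨hs, _⟩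
  · exact absurd hs hblock
  · exact hs

include hst

theorem bubbleSet_subset_of_not_reflTransGen : bubbleSet Adj s' s ⊆ bubbleSet Adj s' t := by
  intro v hv
  rcases ReflTransGen.avoids_or_first_visit t hv with hv | ⟨hvt, _⟩
  · exact ReflTransGen.mono (fun _ _ e => ⟨e.1.1, e.2⟩) _ _ (hv.source_ne_of_target_ne h.1)
  · refine absurd ?_ hblock
    exact (ReflTransGen.mono (fun _ _ e => e.1) _ _ hvt).target_ne_of_source_ne hst.symm

theorem mem_bubbleSet_of_not_reflTransGen : s ∈ bubbleSet Adj s' t :=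
  bubbleSet_subset_of_not_reflTransGen h hst hblock
    (right_mem_bubbleSet_of_not_reflTransGen h hblock)

theorem bubbleSet_eq_of_not_reflTransGen :
    bubbleSet Adj s' s = {v | ReflTransGen (fun u w => Adj u w ∧ w ≠ s') v s} := by
  have hs := mem_bubbleSet_of_not_reflTransGen h hst hblock
  ext v
  constructor
  · intro hv
    by_cases hvs : v = s
    · exact hvs ▸ .refl
    have hvt := h.mem_bubbleSet_iff.mp (bubbleSet_subset_of_not_reflTransGen h hst hblock hv)
    rcases hvt.avoids_or_first_visit s with hvt | ⟨hvs', _⟩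
    · refine absurd ((hv.target_ne_of_source_ne hvs).trans ?_) hblock
      exact ReflTransGen.mono (fun _ _ e => ⟨e.1.1, e.2⟩) _ _ hvt
    · exact ReflTransGen.mono (fun _ _ e => e.1) _ _ hvs'
  · rintro (hv : ReflTransGen (fun u w => Adj u w ∧ w ≠ s') v s)
    have hvU : v ∈ bubbleSet Adj s' t :=
      h.mem_bubbleSet_iff.mpr (hv.trans (h.mem_bubbleSet_iff.mp hs))
    rcases ReflTransGen.avoids_or_first_visit s hvU with hsv | ⟨hs'v, hsv⟩
    · exact ReflTransGen.mono (fun _ _ e => ⟨e.1.1, e.2⟩) _ _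
        (hsv.source_ne_of_target_ne (ne_of_not_reflTransGen h hblock))
    -- a visit to `s` on the way to `v` closes a cycle `s → v → s` in the bubble
    obtain rfl : s = v := h.eq_of_bubbleAdj (reflTransGen_bubbleAdj_of_mem_left hs hsv)
      (h.reflTransGen_bubbleAdj_of_mem_right hs hv)
    exact ReflTransGen.mono (fun _ _ e => ⟨e.1.1, e.2⟩) _ _ hs'v

theorem sbCore_of_not_reflTransGen : SBCore Adj s' s := by
  have hsub := bubbleSet_subset_of_not_reflTransGen h hst hblock
  refine ⟨ne_of_not_reflTransGen h hblock,
    ReflTransGen.mono (fun _ _ e => e.1) _ _ (right_mem_bubbleSet_of_not_reflTransGen h hblock),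
    bubbleSet_eq_of_not_reflTransGen h hst hblock, ?_⟩
  rintro ⟨v, hv, hcyc⟩
  exact h.2.2.2
    ⟨v, hsub hv, TransGen.mono (fun _ _ e => ⟨e.1, hsub e.2.1, hsub e.2.2⟩) _ _ hcyc⟩

end PathsThrough

end SBCore

theorem IsEntranceExit.mem_bubbleSet (h' : IsEntranceExit Adj s' t) (h : SBCore Adj s t) :
    s' ∈ bubbleSet Adj s t := by
  by_contra hs'
  have hblock : ¬ ReflTransGen (fun u w => Adj u w ∧ w ≠ s) s' t :=
    fun hp => hs' (h.mem_bubbleSet_iff.mpr hp)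
  exact h'.2 ⟨s, h'.1.mem_bubbleSet_of_not_reflTransGen h.1 hblock, h.1,
    (h'.1.ne_of_not_reflTransGen hblock).symm, h'.1.sbCore_of_not_reflTransGen h.1 hblock⟩

end Bubble

/-- Any vertex can be the exit of at most one superbubble. -/
theorem exit_unique_entrance {V : Type*} (Adj : V → V → Prop) (s₁ s₂ t : V)
    (h₁ : IsEntranceExit Adj s₁ t) (h₂ : IsEntranceExit Adj s₂ t) : s₁ = s₂ :=
  h₂.1.eq_of_mem_bubbleSet_of_mem_bubbleSet (h₁.mem_bubbleSet h₂.1) (h₂.mem_bubbleSet h₁.1)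
end

section
/- A directed graph with n vertices contains at most n superbubbles: in a finite directed graph on a vertex type V, the set of entrance/exit pairs of superbubbles is finite and has cardinality at most the number of vertices of V. -/
/-- Any path from `s` to `w` either avoids leaving through `a`, or there is a path from
`s` to `a` avoiding leaving through `w`. -/
lemma path_split {V : Type*} (Adj : V → V → Prop) (a : V) :
    ∀ {s w : V}, Relation.ReflTransGen Adj s w →
      Relation.ReflTransGen (fun u v => Adj u v ∧ u ≠ a) s w ∨
        Relation.ReflTransGen (fun u v => Adj u v ∧ u ≠ w) s a := by
  intro s w h
  induction h using Relation.ReflTransGen.head_induction_on with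
  | refl => exact Or.inl .refl
  | head hadj _ ih =>
    rename_i b c _
    by_cases hbw : b = w
    · subst hbw; exact Or.inl .refl
    by_cases hba : b = a
    · subst hba; exact Or.inr .refl
    rcases ih with h1 | h2
    · exact Or.inl (Relation.ReflTransGen.head ⟨hadj, hba⟩ h1)
    · exact Or.inr (Relation.ReflTransGen.head ⟨hadj, hbw⟩ h2)

lemma exit_unique {V : Type*} (Adj : V → V → Prop) {s t1 t2 : V}
    (h1 : IsEntranceExit Adj s t1) (h2 : IsEntranceExit Adj s t2) : t1 = t2 := by
  by_contra hne
  obtain ⟨c1, hmin1⟩ := h1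
  obtain ⟨c2, hmin2⟩ := h2
  rcases path_split Adj t1 c2.2.1 with h | h
  · exact hmin1 ⟨t2, h, fun e => hne e.symm, Ne.symm c2.1, c2⟩
  · exact hmin2 ⟨t1, h, hne, Ne.symm c1.1, c1⟩

/-- A directed graph on `n` vertices has at most `n` superbubbles. -/
theorem superbubbles_card_le {V : Type*} [Fintype V] (Adj : V → V → Prop) :
    {p : V × V | IsEntranceExit Adj p.1 p.2}.Finite ∧
      {p : V × V | IsEntranceExit Adj p.1 p.2}.ncard ≤ Fintype.card V := by
  classical
  refine ⟨Set.toFinite _, ?_⟩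
  have hinj : Set.InjOn (fun p : V × V => p.1)
      {p : V × V | IsEntranceExit Adj p.1 p.2} := by
    intro p hp q hq hpq
    simp only [Set.mem_setOf_eq] at hp hq
    have hpq' : p.1 = q.1 := hpq
    rw [hpq'] at hp
    exact Prod.ext hpq' (exit_unique Adj hp hq)
  have h := Set.ncard_le_ncard_of_injOn (fun p : V × V => p.1)
    (fun p _ => Set.mem_univ p.1) hinj Set.finite_univ
  simpa [Set.ncard_univ] using h
end

section
/- There is a one-to-one correspondence between entrance/exit pairs and superbubbles: if (s₁, t₁) and (s₂, t₂) are entrance/exit pairs of superbubbles in a directed graph with the same vertex set, i.e., U(s₁,t₁) = U(s₂,t₂), then s₁ = s₂ and t₁ = t₂. -/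
lemma bubble_path {V : Type*} (Adj : V → V → Prop) (s t : V) {a b : V}
    (ha : a ∈ bubbleSet Adj s t)
    (h : Relation.ReflTransGen (fun u w => Adj u w ∧ u ≠ t) a b) :
    Relation.ReflTransGen
      (fun u w => Adj u w ∧ u ∈ bubbleSet Adj s t ∧ w ∈ bubbleSet Adj s t) a b := by
  induction h with
  | refl => exact .refl
  | tail h step ih =>
      have hc : _ ∈ bubbleSet Adj s t := Relation.ReflTransGen.trans ha h
      exact ih.tail ⟨step.1, hc, hc.tail step⟩

/-- One-to-one correspondence between entrance/exit pairs and superbubbles. -/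
theorem entrance_exit_pair_unique {V : Type*} (Adj : V → V → Prop) (s₁ t₁ s₂ t₂ : V)
    (h₁ : IsEntranceExit Adj s₁ t₁) (h₂ : IsEntranceExit Adj s₂ t₂)
    (hU : bubbleSet Adj s₁ t₁ = bubbleSet Adj s₂ t₂) : s₁ = s₂ ∧ t₁ = t₂ := by
  obtain ⟨⟨hne₁, hreach₁, hmatch₁, hacyc₁⟩, hmin₁⟩ := h₁
  obtain ⟨⟨hne₂, hreach₂, hmatch₂, hacyc₂⟩, hmin₂⟩ := h₂
  have hs₁ : s₁ ∈ bubbleSet Adj s₁ t₁ := Relation.ReflTransGen.refl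
  have hs₂ : s₂ ∈ bubbleSet Adj s₂ t₂ := Relation.ReflTransGen.refl
  have hss : s₁ = s₂ := by
    by_contra hss
    have h12 : s₂ ∈ bubbleSet Adj s₁ t₁ := by rw [hU]; exact hs₂
    have h21 : s₁ ∈ bubbleSet Adj s₂ t₂ := by rw [← hU]; exact hs₁
    have p1 := bubble_path Adj s₁ t₁ hs₁ h12
    have p2 := bubble_path Adj s₂ t₂ hs₂ h21
    rw [← hU] at p2
    rcases p1.cases_head with h | ⟨c, hc, hcs⟩
    · exact hss h
    · exact hacyc₁ ⟨s₁, hs₁, Relation.TransGen.head' hc (hcs.trans p2)⟩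
  subst hss
  refine ⟨rfl, ?_⟩
  by_contra htt
  have ht₂ : t₂ ∈ bubbleSet Adj s₁ t₂ := by
    rw [hmatch₂]; exact Relation.ReflTransGen.refl
  exact hmin₁ ⟨t₂, by rw [hU]; exact ht₂, fun h => htt h.symm, Ne.symm hne₂,
    hne₂, hreach₂, hmatch₂, hacyc₂⟩
end

section
/- If (s, t₁) and (s, t₂) are entrance/exit pairs of superbubbles sharing the entrance s, and t₂ ∉ U(s,t₁), then t₁ ∈ U(s,t₂). -/
lemma mem_bubbleSet_self {V : Type*} (Adj : V → V → Prop) (s t : V)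
    (h : Relation.ReflTransGen Adj s t) : t ∈ bubbleSet Adj s t := by
  induction h using Relation.ReflTransGen.head_induction_on with
  | refl => exact Relation.ReflTransGen.refl
  | head hab _ ih =>
    rename_i a c _
    by_cases hat : a = t
    · exact hat ▸ Relation.ReflTransGen.refl
    · exact Relation.ReflTransGen.head ⟨hab, hat⟩ ih

lemma bubble_path_avoid {V : Type*} (Adj : V → V → Prop) (s t₁ t₂ v : V)
    (h : t₂ ∉ bubbleSet Adj s t₁) (hv : v ∈ bubbleSet Adj s t₁) :
    Relation.ReflTransGen (fun u w => Adj u w ∧ u ≠ t₂) s v := by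
  induction hv with
  | refl => exact Relation.ReflTransGen.refl
  | tail hb hbc ih =>
    rename_i b c
    have hbne : b ≠ t₂ := fun e => h (e ▸ hb)
    exact Relation.ReflTransGen.tail ih ⟨hbc.1, hbne⟩

/-- If `(s,t₁)` and `(s,t₂)` are entrance/exit pairs sharing the entrance `s` and
`t₂ ∉ U(s,t₁)`, then `t₁ ∈ U(s,t₂)`. -/
theorem exit_mem_of_not_mem {V : Type*} (Adj : V → V → Prop) (s t₁ t₂ : V)
    (h₁ : IsEntranceExit Adj s t₁) (h₂ : IsEntranceExit Adj s t₂)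
    (h : t₂ ∉ bubbleSet Adj s t₁) : t₁ ∈ bubbleSet Adj s t₂ :=
  bubble_path_avoid Adj s t₁ t₂ t₁ h (mem_bubbleSet_self Adj s t₁ h₁.1.2.1)
end
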